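/- arXiv:math/0410557 — 6 statements merged into one kernel-verified Lean document; each statement's English description precedes it below -/
import Mathlib

section
/- Let Ω ⊆ ℝ² be open and let u : Ω → ℝ be a C³ solution of the two-dimensional minimal surface equation E(u) = 0 on Ω. Define v : Ω → ℝ by v(x,y) = y·∂ₓu(x,y) − x·∂_yu(x,y) (the rotation symmetry φ₃¹²). Then for every point (x,y) ∈ Ω, the function ε ↦ E(u + εv)(x,y) is differentiable at ε = 0 with derivative 0; i.e., the linearization of the minimal surface equation at u annihilates v. -/
/-- Partial derivative in the `x` direction of a function on `ℝ²`. -/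
noncomputable def px (f : ℝ × ℝ → ℝ) (z : ℝ × ℝ) : ℝ := fderiv ℝ f z (1, 0)

/-- Partial derivative in the `y` direction of a function on `ℝ²`. -/
noncomputable def py (f : ℝ × ℝ → ℝ) (z : ℝ × ℝ) : ℝ := fderiv ℝ f z (0, 1)

/-- The two-dimensional minimal surface operator
`E(w) = (1 + w_y²)·w_xx − 2·w_x·w_y·w_xy + (1 + w_x²)·w_yy`. -/
noncomputable def msOp (w : ℝ × ℝ → ℝ) (z : ℝ × ℝ) : ℝ :=
  (1 + (py w z) ^ 2) * px (px w) z - 2 * px w z * py w z * py (px w) z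
    + (1 + (px w z) ^ 2) * py (py w) z

/-!
Let `R = y ∂ₓ − x ∂_y` be the derivative along the rotation field. It satisfies
`[∂ₓ, R] = −∂_y` and `[∂_y, R] = ∂ₓ`, so the 2-jet of `v = R u` is `R` applied to the 2-jet of `u`
plus the infinitesimal rotation of that jet. Since `E(w) = F(j²w)` for a polynomial `F`, the
linearization of `E` at `u` applied to `v` is `R (E u)` plus `dF` applied to the infinitesimal
rotation of `j²u`. The second term vanishes because `F` is rotation invariant, and the first
because `E u` vanishes on the open set `Ω`.
-/

open Filter Topology

noncomputable def rotDeriv (f : ℝ × ℝ → ℝ) (z : ℝ × ℝ) : ℝ := z.2 * px f z - z.1 * py f z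

def msPoly (a b p q r : ℝ) : ℝ := (1 + b ^ 2) * p - 2 * a * b * q + (1 + a ^ 2) * r

def msPolyDeriv (a b p q r A B P Q R : ℝ) : ℝ :=
  2 * b * B * p + (1 + b ^ 2) * P - 2 * (A * b + a * B) * q - 2 * a * b * Q
    + 2 * a * A * r + (1 + a ^ 2) * R

lemma msOp_eq_msPoly (w : ℝ × ℝ → ℝ) (z : ℝ × ℝ) :
    msOp w z = msPoly (px w z) (py w z) (px (px w) z) (py (px w) z) (py (py w) z) := rfl

lemma hasDerivAt_msPoly {g₁ g₂ g₃ g₄ g₅ : ℝ → ℝ} {A B P Q R t : ℝ}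
    (h₁ : HasDerivAt g₁ A t) (h₂ : HasDerivAt g₂ B t) (h₃ : HasDerivAt g₃ P t)
    (h₄ : HasDerivAt g₄ Q t) (h₅ : HasDerivAt g₅ R t) :
    HasDerivAt (fun s => msPoly (g₁ s) (g₂ s) (g₃ s) (g₄ s) (g₅ s))
      (msPolyDeriv (g₁ t) (g₂ t) (g₃ t) (g₄ t) (g₅ t) A B P Q R) t := by
  unfold msPoly msPolyDeriv
  refine ((((h₂.fun_pow 2).const_add 1).fun_mul h₃).fun_sub
    (((h₁.const_mul 2).fun_mul h₂).fun_mul h₄)).fun_add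
    (((h₁.fun_pow 2).const_add 1).fun_mul h₅) |>.congr_deriv ?_
  push_cast
  ring

/-- `(-b, a, -2q, p - r, 2q)` is the infinitesimal rotation of the 2-jet `(a, b, p, q, r)`, so this
is the rotation invariance of `msPoly`. -/
lemma msPolyDeriv_add_rotation (a b p q r A B P Q R : ℝ) :
    msPolyDeriv a b p q r (A - b) (B + a) (P - 2 * q) (Q + p - r) (R + 2 * q) =
      msPolyDeriv a b p q r A B P Q R := by
  unfold msPolyDeriv
  ring

section Calculus

variable {f g : ℝ × ℝ → ℝ} {z : ℝ × ℝ}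

lemma ContDiffAt.px {m n : WithTop ℕ∞} (hf : ContDiffAt ℝ n f z) (hmn : m + 1 ≤ n) :
    ContDiffAt ℝ m (px f) z :=
  (hf.fderiv_right hmn).clm_apply contDiffAt_const

lemma ContDiffAt.py {m n : WithTop ℕ∞} (hf : ContDiffAt ℝ n f z) (hmn : m + 1 ≤ n) :
    ContDiffAt ℝ m (py f) z :=
  (hf.fderiv_right hmn).clm_apply contDiffAt_const

lemma ContDiffAt.rotDeriv {m n : WithTop ℕ∞} (hf : ContDiffAt ℝ n f z) (hmn : m + 1 ≤ n) :
    ContDiffAt ℝ m (rotDeriv f) z :=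
  (contDiffAt_snd.mul (hf.px hmn)).sub (contDiffAt_fst.mul (hf.py hmn))

lemma ContDiffAt.differentiableAt_px (hf : ContDiffAt ℝ 2 f z) :
    DifferentiableAt ℝ (_root_.px f) z :=
  (hf.px (m := 1) (by norm_num)).differentiableAt one_ne_zero

lemma ContDiffAt.differentiableAt_py (hf : ContDiffAt ℝ 2 f z) :
    DifferentiableAt ℝ (_root_.py f) z :=
  (hf.py (m := 1) (by norm_num)).differentiableAt one_ne_zero

lemma ContDiffAt.differentiableAt_rotDeriv (hf : ContDiffAt ℝ 2 f z) :
    DifferentiableAt ℝ (_root_.rotDeriv f) z :=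
  (hf.rotDeriv (m := 1) (by norm_num)).differentiableAt one_ne_zero

lemma px_py_comm (hf : ContDiffAt ℝ 2 f z) : px (py f) z = py (px f) z := by
  have hdf : DifferentiableAt ℝ (fderiv ℝ f) z :=
    (hf.fderiv_right (m := 1) (by norm_num)).differentiableAt one_ne_zero
  have key : ∀ d₁ d₂ : ℝ × ℝ,
      fderiv ℝ (fun w => fderiv ℝ f w d₂) z d₁ = fderiv ℝ (fderiv ℝ f) z d₁ d₂ := by
    intro d₁ d₂
    rw [fderiv_clm_apply hdf (differentiableAt_const _)]
    simp
  change fderiv ℝ (fun w => fderiv ℝ f w (0, 1)) z (1, 0)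
    = fderiv ℝ (fun w => fderiv ℝ f w (1, 0)) z (0, 1)
  rw [key, key]
  exact (hf.isSymmSndFDerivAt (by simp)).eq _ _

lemma px_congr (h : f =ᶠ[𝓝 z] g) : px f z = px g z := by
  rw [px, px, h.fderiv_eq]

lemma py_congr (h : f =ᶠ[𝓝 z] g) : py f z = py g z := by
  rw [py, py, h.fderiv_eq]

lemma px_add_mul (hf : DifferentiableAt ℝ f z) (hg : DifferentiableAt ℝ g z) (c : ℝ) :
    px (fun w => f w + c * g w) z = px f z + c * px g z := by
  rw [px, fderiv_fun_add hf (hg.const_mul c), fderiv_const_mul hg]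
  rfl

lemma py_add_mul (hf : DifferentiableAt ℝ f z) (hg : DifferentiableAt ℝ g z) (c : ℝ) :
    py (fun w => f w + c * g w) z = py f z + c * py g z := by
  rw [py, fderiv_fun_add hf (hg.const_mul c), fderiv_const_mul hg]
  rfl

lemma px_sub (hf : DifferentiableAt ℝ f z) (hg : DifferentiableAt ℝ g z) :
    px (fun w => f w - g w) z = px f z - px g z := by
  rw [px, fderiv_fun_sub hf hg]
  rfl

lemma py_sub (hf : DifferentiableAt ℝ f z) (hg : DifferentiableAt ℝ g z) :
    py (fun w => f w - g w) z = py f z - py g z := by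
  rw [py, fderiv_fun_sub hf hg]
  rfl

lemma py_add (hf : DifferentiableAt ℝ f z) (hg : DifferentiableAt ℝ g z) :
    py (fun w => f w + g w) z = py f z + py g z := by
  rw [py, fderiv_fun_add hf hg]
  rfl

lemma msOp_add_mul (hf : ContDiffAt ℝ 2 f z) (hg : ContDiffAt ℝ 2 g z) (c : ℝ) :
    msOp (fun w => f w + c * g w) z =
      msPoly (px f z + c * px g z) (py f z + c * py g z) (px (px f) z + c * px (px g) z)
        (py (px f) z + c * py (px g) z) (py (py f) z + c * py (py g) z) := by
  have hdiff : ∀ᶠ w in 𝓝 z, DifferentiableAt ℝ f w ∧ DifferentiableAt ℝ g w := by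
    filter_upwards [hf.eventually (by simp), hg.eventually (by simp)] with w hfw hgw
    exact ⟨hfw.differentiableAt (by norm_num), hgw.differentiableAt (by norm_num)⟩
  have hpx : px (fun w => f w + c * g w) =ᶠ[𝓝 z] fun w => px f w + c * px g w := by
    filter_upwards [hdiff] with w ⟨hfw, hgw⟩ using px_add_mul hfw hgw c
  have hpy : py (fun w => f w + c * g w) =ᶠ[𝓝 z] fun w => py f w + c * py g w := by
    filter_upwards [hdiff] with w ⟨hfw, hgw⟩ using py_add_mul hfw hgw c
  rw [msOp_eq_msPoly, hpx.eq_of_nhds, hpy.eq_of_nhds, px_congr hpx, py_congr hpx, py_congr hpy,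
    px_add_mul hf.differentiableAt_px hg.differentiableAt_px,
    py_add_mul hf.differentiableAt_px hg.differentiableAt_px,
    py_add_mul hf.differentiableAt_py hg.differentiableAt_py]

end Calculus

section Rotation

variable {f u : ℝ × ℝ → ℝ} {z : ℝ × ℝ}

lemma rotDeriv_eq_fderiv_apply (f : ℝ × ℝ → ℝ) (z : ℝ × ℝ) :
    rotDeriv f z = fderiv ℝ f z (z.2, -z.1) := by
  have hd : (z.2, -z.1) = z.2 • ((1 : ℝ), (0 : ℝ)) + (-z.1) • ((0 : ℝ), (1 : ℝ)) := by
    ext <;> simp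
  rw [hd, map_add, map_smul, map_smul, rotDeriv, px, py, smul_eq_mul, smul_eq_mul]
  ring

lemma rotDeriv_eq_zero_of_eventually_eq_zero (h : ∀ᶠ w in 𝓝 z, f w = 0) :
    rotDeriv f z = 0 := by
  rw [rotDeriv_eq_fderiv_apply, EventuallyEq.fderiv_eq (f := fun _ => (0 : ℝ)) h]
  simp

lemma hasDerivAt_comp_add_smul (hf : DifferentiableAt ℝ f z) (d : ℝ × ℝ) :
    HasDerivAt (fun t : ℝ => f (z + t • d)) (fderiv ℝ f z d) 0 := by
  have hline : HasDerivAt (fun t : ℝ => z + t • d) d 0 := by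
    simpa using ((hasDerivAt_id (0 : ℝ)).smul_const d).const_add z
  exact hf.hasFDerivAt.comp_hasDerivAt_of_eq 0 hline (by simp)

lemma rotDeriv_msPoly_comp {g₁ g₂ g₃ g₄ g₅ : ℝ × ℝ → ℝ} (h₁ : DifferentiableAt ℝ g₁ z)
    (h₂ : DifferentiableAt ℝ g₂ z) (h₃ : DifferentiableAt ℝ g₃ z)
    (h₄ : DifferentiableAt ℝ g₄ z) (h₅ : DifferentiableAt ℝ g₅ z) :
    rotDeriv (fun w => msPoly (g₁ w) (g₂ w) (g₃ w) (g₄ w) (g₅ w)) z =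
      msPolyDeriv (g₁ z) (g₂ z) (g₃ z) (g₄ z) (g₅ z) (rotDeriv g₁ z) (rotDeriv g₂ z)
        (rotDeriv g₃ z) (rotDeriv g₄ z) (rotDeriv g₅ z) := by
  have hF : DifferentiableAt ℝ (fun w => msPoly (g₁ w) (g₂ w) (g₃ w) (g₄ w) (g₅ w)) z := by
    unfold msPoly
    fun_prop
  simp only [rotDeriv_eq_fderiv_apply]
  refine (hasDerivAt_comp_add_smul hF _).unique ?_
  have H := hasDerivAt_msPoly (hasDerivAt_comp_add_smul h₁ (z.2, -z.1))
    (hasDerivAt_comp_add_smul h₂ (z.2, -z.1)) (hasDerivAt_comp_add_smul h₃ (z.2, -z.1))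
    (hasDerivAt_comp_add_smul h₄ (z.2, -z.1)) (hasDerivAt_comp_add_smul h₅ (z.2, -z.1))
  simp only [zero_smul, add_zero] at H
  exact H

lemma px_rotDeriv (hf : ContDiffAt ℝ 2 f z) :
    px (rotDeriv f) z = rotDeriv (px f) z - py f z := by
  have hx := hf.differentiableAt_px
  have hy := hf.differentiableAt_py
  have hxy := px_py_comm hf
  unfold rotDeriv px at *
  rw [fderiv_fun_sub (differentiableAt_snd.fun_mul hx) (differentiableAt_fst.fun_mul hy),
    fderiv_fun_mul differentiableAt_snd hx, fderiv_fun_mul differentiableAt_fst hy,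
    fderiv_snd, fderiv_fst]
  simp only [sub_apply, add_apply, smul_apply, smul_eq_mul, ContinuousLinearMap.coe_snd',
    ContinuousLinearMap.coe_fst', mul_zero, mul_one, add_zero, hxy]
  ring

lemma py_rotDeriv (hf : ContDiffAt ℝ 2 f z) :
    py (rotDeriv f) z = rotDeriv (py f) z + px f z := by
  have hx := hf.differentiableAt_px
  have hy := hf.differentiableAt_py
  have hxy := px_py_comm hf
  unfold rotDeriv px py at *
  rw [fderiv_fun_sub (differentiableAt_snd.fun_mul hx) (differentiableAt_fst.fun_mul hy),
    fderiv_fun_mul differentiableAt_snd hx, fderiv_fun_mul differentiableAt_fst hy,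
    fderiv_snd, fderiv_fst]
  simp only [sub_apply, add_apply, smul_apply, smul_eq_mul, ContinuousLinearMap.coe_snd',
    ContinuousLinearMap.coe_fst', mul_zero, mul_one, add_zero, hxy]
  ring

lemma px_rotDeriv_eventuallyEq (hf : ContDiffAt ℝ 2 f z) :
    px (rotDeriv f) =ᶠ[𝓝 z] fun w => rotDeriv (px f) w - py f w :=
  (hf.eventually (by simp)).mono fun _ hw => px_rotDeriv hw

lemma py_rotDeriv_eventuallyEq (hf : ContDiffAt ℝ 2 f z) :
    py (rotDeriv f) =ᶠ[𝓝 z] fun w => rotDeriv (py f) w + px f w :=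
  (hf.eventually (by simp)).mono fun _ hw => py_rotDeriv hw

lemma px_px_rotDeriv (hu : ContDiffAt ℝ 3 u z) :
    px (px (rotDeriv u)) z = rotDeriv (px (px u)) z - 2 * py (px u) z := by
  have hu2 : ContDiffAt ℝ 2 u z := hu.of_le (by norm_num)
  have hux : ContDiffAt ℝ 2 (px u) z := hu.px (by norm_num)
  rw [px_congr (px_rotDeriv_eventuallyEq hu2),
    px_sub hux.differentiableAt_rotDeriv hu2.differentiableAt_py, px_rotDeriv hux,
    px_py_comm hu2]
  ring

lemma py_px_rotDeriv (hu : ContDiffAt ℝ 3 u z) :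
    py (px (rotDeriv u)) z = rotDeriv (py (px u)) z + px (px u) z - py (py u) z := by
  have hu2 : ContDiffAt ℝ 2 u z := hu.of_le (by norm_num)
  have hux : ContDiffAt ℝ 2 (px u) z := hu.px (by norm_num)
  rw [py_congr (px_rotDeriv_eventuallyEq hu2),
    py_sub hux.differentiableAt_rotDeriv hu2.differentiableAt_py, py_rotDeriv hux]

lemma py_py_rotDeriv (hu : ContDiffAt ℝ 3 u z) :
    py (py (rotDeriv u)) z = rotDeriv (py (py u)) z + 2 * py (px u) z := by
  have hu2 : ContDiffAt ℝ 2 u z := hu.of_le (by norm_num)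
  have huy : ContDiffAt ℝ 2 (py u) z := hu.py (by norm_num)
  rw [py_congr (py_rotDeriv_eventuallyEq hu2),
    py_add huy.differentiableAt_rotDeriv hu2.differentiableAt_px, py_rotDeriv huy,
    px_py_comm hu2]
  ring

lemma rotDeriv_msOp (hu : ContDiffAt ℝ 3 u z) :
    rotDeriv (msOp u) z =
      msPolyDeriv (px u z) (py u z) (px (px u) z) (py (px u) z) (py (py u) z)
        (rotDeriv (px u) z) (rotDeriv (py u) z) (rotDeriv (px (px u)) z)
        (rotDeriv (py (px u)) z) (rotDeriv (py (py u)) z) := by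
  have hux : ContDiffAt ℝ 2 (px u) z := hu.px (by norm_num)
  have huy : ContDiffAt ℝ 2 (py u) z := hu.py (by norm_num)
  exact rotDeriv_msPoly_comp (hux.differentiableAt (by norm_num))
    (huy.differentiableAt (by norm_num)) hux.differentiableAt_px hux.differentiableAt_py
    huy.differentiableAt_py

theorem hasDerivAt_msOp_add_mul_rotDeriv (hu : ContDiffAt ℝ 3 u z) :
    HasDerivAt (fun ε : ℝ => msOp (fun w => u w + ε * rotDeriv u w) z)
      (rotDeriv (msOp u) z) 0 := by
  have hline : ∀ a A : ℝ, HasDerivAt (fun ε : ℝ => a + ε * A) A 0 := fun a A => by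
    simpa using ((hasDerivAt_id (0 : ℝ)).mul_const A).const_add a
  have hu2 : ContDiffAt ℝ 2 u z := hu.of_le (by norm_num)
  simp only [msOp_add_mul hu2 (hu.rotDeriv (by norm_num))]
  refine (hasDerivAt_msPoly (hline _ _) (hline _ _) (hline _ _) (hline _ _)
    (hline _ _)).congr_deriv ?_
  simp only [zero_mul, add_zero]
  rw [rotDeriv_msOp hu, px_rotDeriv hu2, py_rotDeriv hu2, px_px_rotDeriv hu, py_px_rotDeriv hu,
    py_py_rotDeriv hu, msPolyDeriv_add_rotation]

end Rotation

/-- The rotation `φ₃¹² = y·u_x − x·u_y` is an infinitesimal symmetry of the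
two-dimensional minimal surface equation at every `C³` solution `u`. -/
theorem rotation_is_infinitesimal_symmetry
    (Ω : Set (ℝ × ℝ)) (hΩ : IsOpen Ω) (u : ℝ × ℝ → ℝ)
    (hu : ContDiffOn ℝ 3 u Ω) (hsol : ∀ z ∈ Ω, msOp u z = 0) :
    ∀ z ∈ Ω, HasDerivAt
      (fun ε : ℝ => msOp (fun w => u w + ε * (w.2 * px u w - w.1 * py u w)) z) 0 0 := by
  intro z hz
  have hΩz : Ω ∈ 𝓝 z := hΩ.mem_nhds hz
  have hE : rotDeriv (msOp u) z = 0 :=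
    rotDeriv_eq_zero_of_eventually_eq_zero (eventually_of_mem hΩz hsol)
  exact hE ▸ hasDerivAt_msOp_add_mul_rotDeriv (hu.contDiffAt hΩz)
end

section
/- Let n ≥ 1, let Ω ⊆ ℝⁿ be open, and let u : Ω → ℝ be a C² solution of the n-dimensional minimal surface equation (1 + |∇u|²)·Δu − Σ_{i,j} uᵢuⱼ·∂²u/∂xⁱ∂xʲ = 0 on Ω, where uᵢ = ∂u/∂xⁱ and W = √(1 + |∇u|²). Then for each index i, the continuity equation assigned to the translation symmetry φ₂ⁱ = uᵢ holds on Ω: ∂/∂xⁱ ( uᵢ²/W − W ) + Σ_{j ≠ i} ∂/∂xʲ ( uᵢ·uⱼ / W ) = 0. -/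
open Finset

/-- The partial derivative `∂f/∂xⁱ` of a function on `ℝⁿ`. -/
noncomputable def pd {n : ℕ} (f : EuclideanSpace ℝ (Fin n) → ℝ) (i : Fin n)
    (x : EuclideanSpace ℝ (Fin n)) : ℝ :=
  fderiv ℝ f x (EuclideanSpace.single i 1)

/-!
For a vector field `p` and `W = areaElement p = √(1 + |p|²)`, the product and quotient rules give
`Σⱼ ∂ⱼ(pᵢpⱼ/W) − ∂ᵢW = Σⱼ pⱼ(∂ⱼpᵢ − ∂ᵢpⱼ)/W + (pᵢ/W³)·((1 + |p|²) div p − Σⱼₖ pⱼpₖ ∂ₖpⱼ)`,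
with no assumption on `p` beyond differentiability. For `p = ∇u` the curl term vanishes by
symmetry of second derivatives, and the second term is `uᵢ/W³` times the minimal surface operator.
-/

section PartialDerivativeCalculus

variable {n : ℕ} {f g : EuclideanSpace ℝ (Fin n) → ℝ} {x : EuclideanSpace ℝ (Fin n)}

theorem pd_sub (hf : DifferentiableAt ℝ f x) (hg : DifferentiableAt ℝ g x) (i : Fin n) :
    pd (fun y => f y - g y) i x = pd f i x - pd g i x := by
  simp only [pd, fderiv_fun_sub hf hg, sub_apply]

theorem pd_const_add (c : ℝ) (i : Fin n) : pd (fun y => c + f y) i x = pd f i x := by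
  simp only [pd, fderiv_const_add]

theorem pd_sum {ι : Type*} (s : Finset ι) {F : ι → EuclideanSpace ℝ (Fin n) → ℝ}
    (hF : ∀ k ∈ s, DifferentiableAt ℝ (F k) x) (i : Fin n) :
    pd (fun y => ∑ k ∈ s, F k y) i x = ∑ k ∈ s, pd (F k) i x := by
  simp only [pd, fderiv_fun_sum hF, FunLike.coe_sum, Finset.sum_apply]

theorem pd_mul (hf : DifferentiableAt ℝ f x) (hg : DifferentiableAt ℝ g x) (i : Fin n) :
    pd (fun y => f y * g y) i x = pd f i x * g x + f x * pd g i x := by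
  simp only [pd, fderiv_fun_mul hf hg, add_apply, smul_apply, smul_eq_mul]
  ring

theorem pd_comp {h : ℝ → ℝ} {h' : ℝ} (hh : HasDerivAt h h' (f x)) (hf : DifferentiableAt ℝ f x)
    (i : Fin n) : pd (fun y => h (f y)) i x = h' * pd f i x := by
  rw [pd, show (fun y => h (f y)) = h ∘ f from rfl, (hh.comp_hasFDerivAt x hf.hasFDerivAt).fderiv]
  rfl

theorem pd_div (hf : DifferentiableAt ℝ f x) (hg : DifferentiableAt ℝ g x) (hgx : g x ≠ 0)
    (i : Fin n) :
    pd (fun y => f y / g y) i x = (pd f i x * g x - f x * pd g i x) / g x ^ 2 := by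
  simp only [div_eq_mul_inv]
  rw [pd_mul hf (hg.fun_inv hgx), pd_comp (hasDerivAt_inv hgx) hg]
  field_simp
  ring

theorem pd_sqrt (hf : DifferentiableAt ℝ f x) (hfx : f x ≠ 0) (i : Fin n) :
    pd (fun y => √(f y)) i x = pd f i x / (2 * √(f x)) := by
  rw [pd_comp (Real.hasDerivAt_sqrt hfx) hf]
  ring

theorem differentiableAt_pd {u : EuclideanSpace ℝ (Fin n) → ℝ} (hu : ContDiffAt ℝ 2 u x)
    (k : Fin n) : DifferentiableAt ℝ (pd u k) x :=
  ((hu.fderiv_right le_rfl).differentiableAt one_ne_zero).clm_apply (differentiableAt_const _)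

theorem pd_pd_comm {u : EuclideanSpace ℝ (Fin n) → ℝ} (hu : ContDiffAt ℝ 2 u x)
    (j k : Fin n) : pd (pd u j) k x = pd (pd u k) j x := by
  have hD := (hu.fderiv_right le_rfl).differentiableAt one_ne_zero
  change fderiv ℝ (fun y => fderiv ℝ u y _) x _ = fderiv ℝ (fun y => fderiv ℝ u y _) x _
  simp only [fderiv_clm_apply hD (differentiableAt_const _), fderiv_fun_const, Pi.zero_apply,
    ContinuousLinearMap.comp_zero, zero_add, ContinuousLinearMap.flip_apply]
  exact hu.isSymmSndFDerivAt (by simp [minSmoothness_of_isRCLikeNormedField]) _ _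

end PartialDerivativeCalculus

section AreaElement

variable {n : ℕ} {p : Fin n → EuclideanSpace ℝ (Fin n) → ℝ} {x : EuclideanSpace ℝ (Fin n)}

noncomputable def areaElement (p : Fin n → EuclideanSpace ℝ (Fin n) → ℝ)
    (y : EuclideanSpace ℝ (Fin n)) : ℝ :=
  √(1 + ∑ k, p k y ^ 2)

theorem one_add_sum_sq_pos (a : Fin n → ℝ) : 0 < 1 + ∑ k, a k ^ 2 := by positivity

theorem areaElement_pos : 0 < areaElement p x := Real.sqrt_pos.2 (one_add_sum_sq_pos _)

theorem sq_areaElement : areaElement p x ^ 2 = 1 + ∑ k, p k x ^ 2 :=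
  Real.sq_sqrt (one_add_sum_sq_pos _).le

theorem differentiableAt_one_add_sum_sq (hp : ∀ k, DifferentiableAt ℝ (p k) x) :
    DifferentiableAt ℝ (fun y => 1 + ∑ k, p k y ^ 2) x := by
  fun_prop

theorem differentiableAt_areaElement (hp : ∀ k, DifferentiableAt ℝ (p k) x) :
    DifferentiableAt ℝ (areaElement p) x :=
  (differentiableAt_one_add_sum_sq hp).sqrt (one_add_sum_sq_pos _).ne'

theorem pd_areaElement (hp : ∀ k, DifferentiableAt ℝ (p k) x) (j : Fin n) :
    pd (areaElement p) j x = (∑ k, p k x * pd (p k) j x) / areaElement p x := by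
  have hsq : ∀ k, pd (fun y => p k y ^ 2) j x = 2 * (p k x * pd (p k) j x) := fun k => by
    simp only [pow_two, pd_mul (hp k) (hp k)]
    ring
  unfold areaElement
  rw [pd_sqrt (differentiableAt_one_add_sum_sq hp) (one_add_sum_sq_pos _).ne',
    pd_const_add, pd_sum (F := fun k y => p k y ^ 2) _ (fun k _ => (hp k).fun_pow 2),
    Finset.sum_congr rfl (fun k _ => hsq k), ← Finset.mul_sum]
  field_simp

theorem pd_mul_div_areaElement (hp : ∀ k, DifferentiableAt ℝ (p k) x) (i j : Fin n) :
    pd (fun y => p i y * p j y / areaElement p y) j x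
      = (p j x * pd (p i) j x + p i x * pd (p j) j x) / areaElement p x
        - p i x * p j x * (∑ k, p k x * pd (p k) j x) / areaElement p x ^ 3 := by
  have hW := (areaElement_pos (p := p) (x := x)).ne'
  rw [pd_div ((hp i).fun_mul (hp j)) (differentiableAt_areaElement hp) hW, pd_mul (hp i) (hp j),
    pd_areaElement hp]
  field_simp

theorem sum_pd_mul_div_areaElement_sub_pd_areaElement (hp : ∀ k, DifferentiableAt ℝ (p k) x)
    (i : Fin n) :
    ∑ j, pd (fun y => p i y * p j y / areaElement p y) j x - pd (areaElement p) i x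
      = (∑ j, p j x * (pd (p i) j x - pd (p j) i x)) / areaElement p x
        + p i x / areaElement p x ^ 3 * ((1 + ∑ k, p k x ^ 2) * ∑ j, pd (p j) j x
          - ∑ j, ∑ k, p j x * p k x * pd (p j) k x) := by
  have hW := (areaElement_pos (p := p) (x := x)).ne'
  have hswap : ∑ j, ∑ k, p j x * p k x * pd (p k) j x
      = ∑ j, ∑ k, p j x * p k x * pd (p j) k x := by
    rw [Finset.sum_comm]
    exact Finset.sum_congr rfl fun _ _ => Finset.sum_congr rfl fun _ _ => by ring
  calc ∑ j, pd (fun y => p i y * p j y / areaElement p y) j x - pd (areaElement p) i x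
      = (∑ j, p j x * pd (p i) j x + p i x * ∑ j, pd (p j) j x) / areaElement p x
        - p i x * (∑ j, ∑ k, p j x * p k x * pd (p k) j x) / areaElement p x ^ 3
        - (∑ j, p j x * pd (p j) i x) / areaElement p x := by
        simp only [pd_mul_div_areaElement hp, pd_areaElement hp, Finset.sum_sub_distrib,
          Finset.sum_add_distrib, ← Finset.sum_div, Finset.mul_sum, mul_assoc]
    _ = _ := by
        rw [← sq_areaElement, hswap]
        simp only [mul_sub, Finset.sum_sub_distrib]
        field_simp
        ring

theorem pd_sq_div_sub_add_sum_erase (hp : ∀ k, DifferentiableAt ℝ (p k) x) (i : Fin n) :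
    pd (fun y => p i y ^ 2 / areaElement p y - areaElement p y) i x
        + ∑ j ∈ univ.erase i, pd (fun y => p i y * p j y / areaElement p y) j x
      = ∑ j, pd (fun y => p i y * p j y / areaElement p y) j x - pd (areaElement p) i x := by
  have hW := differentiableAt_areaElement hp
  have hsqW : DifferentiableAt ℝ (fun y => p i y ^ 2 / areaElement p y) x := by
    simpa only [div_eq_mul_inv] using ((hp i).fun_pow 2).fun_mul (hW.fun_inv areaElement_pos.ne')
  rw [pd_sub hsqW hW, ← Finset.add_sum_erase _ _ (mem_univ i)]
  simp only [pow_two]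
  ring

end AreaElement

theorem translation_conservation_law_general
    (n : ℕ) (Ω : Set (EuclideanSpace ℝ (Fin n))) (hΩ : IsOpen Ω)
    (u : EuclideanSpace ℝ (Fin n) → ℝ) (hu : ContDiffOn ℝ 2 u Ω)
    (hsol : ∀ x ∈ Ω, (1 + ∑ j, (pd u j x) ^ 2) * (∑ i, pd (pd u i) i x)
        - ∑ i, ∑ j, pd u i x * pd u j x * pd (pd u i) j x = 0) :
    ∀ i : Fin n, ∀ x ∈ Ω,
      pd (fun y => (pd u i y) ^ 2 / Real.sqrt (1 + ∑ j, (pd u j y) ^ 2)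
            - Real.sqrt (1 + ∑ j, (pd u j y) ^ 2)) i x
        + ∑ j ∈ univ.erase i,
            pd (fun y => pd u i y * pd u j y / Real.sqrt (1 + ∑ k, (pd u k y) ^ 2)) j x
        = 0 := by
  intro i x hx
  have hu2 : ContDiffAt ℝ 2 u x := hu.contDiffAt (hΩ.mem_nhds hx)
  have hp : ∀ k, DifferentiableAt ℝ (pd u k) x := differentiableAt_pd hu2
  have hcurl : ∑ j, pd u j x * (pd (pd u i) j x - pd (pd u j) i x) = 0 := by
    simp [pd_pd_comm hu2 i]
  have hflux := sum_pd_mul_div_areaElement_sub_pd_areaElement hp i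
  rw [hcurl, hsol x hx, zero_div, mul_zero, add_zero] at hflux
  exact (pd_sq_div_sub_add_sum_erase hp i).trans hflux

/-- The continuity equation assigned to the translation symmetry `φ₂ⁱ = uᵢ` for a
`C²` solution of the `n`-dimensional minimal surface equation:
`Dᵢ(uᵢ²/W − W) + Σ_{j ≠ i} Dⱼ(uᵢuⱼ/W) = 0`, where `W = √(1 + |∇u|²)`. -/
theorem translation_conservation_law
    (n : ℕ) (hn : 1 ≤ n) (Ω : Set (EuclideanSpace ℝ (Fin n))) (hΩ : IsOpen Ω)
    (u : EuclideanSpace ℝ (Fin n) → ℝ) (hu : ContDiffOn ℝ 2 u Ω)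
    (hsol : ∀ x ∈ Ω, (1 + ∑ j, (pd u j x) ^ 2) * (∑ i, pd (pd u i) i x)
        - ∑ i, ∑ j, pd u i x * pd u j x * pd (pd u i) j x = 0) :
    ∀ i : Fin n, ∀ x ∈ Ω,
      pd (fun y => (pd u i y) ^ 2 / Real.sqrt (1 + ∑ j, (pd u j y) ^ 2)
            - Real.sqrt (1 + ∑ j, (pd u j y) ^ 2)) i x
        + ∑ j ∈ univ.erase i,
            pd (fun y => pd u i y * pd u j y / Real.sqrt (1 + ∑ k, (pd u k y) ^ 2)) j x
        = 0 :=
  translation_conservation_law_general n Ω hΩ u hu hsol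
end

section
/- Let Ω ⊆ ℝ² be open and connected, let u : Ω → ℝ be a C² solution of the two-dimensional minimal surface equation (1 + u_y²)uₓₓ − 2uₓu_y·uₓᵧ + (1 + uₓ²)u_yy = 0 on Ω, and suppose there is a C¹ function φ : ℝ → ℝ such that ∂_yu = φ(∂ₓu) on Ω (i.e., the minimal surface is invariant under a contact symmetry depending only on first derivatives). Then all second-order partial derivatives of u vanish identically on Ω, so ∇u is constant and the graph of u is (part of) a plane. -/
/-!
Differentiating `u_y = φ(u_x)` gives `u_xy = c·u_xx` and `u_yy = c·u_xy` with `c = φ'(u_x)`, so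
by symmetry of second derivatives the Hessian is `u_xx · (1, c) ⊗ (1, c)`. The minimal surface
equation then reads `u_xx · Q(1, c) = 0`, where `Q` is the symbol of the operator, which is
positive definite because the equation is elliptic. Hence `u_xx = 0` and the whole Hessian
vanishes; on a connected domain this makes `∇u` constant.
-/

open Filter Topology

section Calculus

variable {E : Type*} [NormedAddCommGroup E] [NormedSpace ℝ E]

theorem fderiv_eq_deriv_smul_of_eventuallyEq_comp {f g : E → ℝ} {φ : ℝ → ℝ} {z : E}
    (h : g =ᶠ[𝓝 z] fun w => φ (f w)) (hφ : DifferentiableAt ℝ φ (f z))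
    (hf : DifferentiableAt ℝ f z) : fderiv ℝ g z = deriv φ (f z) • fderiv ℝ f z := by
  rw [h.fderiv_eq]
  exact (hφ.hasDerivAt.comp_hasFDerivAt z hf.hasFDerivAt).fderiv

variable {F : Type*} [NormedAddCommGroup F] [NormedSpace ℝ F]

theorem ContDiffAt.differentiableAt_fderiv_apply {u : E → F} {z : E} (hu : ContDiffAt ℝ 2 u z)
    (v : E) : DifferentiableAt ℝ (fun w => fderiv ℝ u w v) z :=
  ((hu.fderiv_right (m := 1) le_rfl).differentiableAt one_ne_zero).clm_apply
    (differentiableAt_const v)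

theorem fderiv_fderiv_apply {u : E → F} {z : E} (hu : DifferentiableAt ℝ (fderiv ℝ u) z)
    (v w : E) : fderiv ℝ (fun y => fderiv ℝ u y v) z w = fderiv ℝ (fderiv ℝ u) z w v := by
  simp [fderiv_clm_apply hu (differentiableAt_const v)]

end Calculus

theorem fderiv_eq_zero_iff_px_py {f : ℝ × ℝ → ℝ} {z : ℝ × ℝ} :
    fderiv ℝ f z = 0 ↔ px f z = 0 ∧ py f z = 0 := by
  refine ⟨fun h => by simp [px, py, h], fun ⟨hx, hy⟩ => ContinuousLinearMap.ext fun v => ?_⟩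
  have hv : v = v.1 • ((1 : ℝ), (0 : ℝ)) + v.2 • ((0 : ℝ), (1 : ℝ)) := by simp
  rw [px] at hx
  rw [py] at hy
  rw [hv, map_add, map_smul, map_smul, hx, hy]
  simp

theorem exists_const_of_px_py_eq_zero {f : ℝ × ℝ → ℝ} {Ω : Set (ℝ × ℝ)} (hΩ : IsOpen Ω)
    (hc : IsPreconnected Ω) (hf : DifferentiableOn ℝ f Ω)
    (h : ∀ z ∈ Ω, px f z = 0 ∧ py f z = 0) : ∃ a, ∀ z ∈ Ω, f z = a :=
  hΩ.exists_is_const_of_fderiv_eq_zero hc hf fun z hz => fderiv_eq_zero_iff_px_py.2 (h z hz)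

theorem py_px_eq_px_py {u : ℝ × ℝ → ℝ} {z : ℝ × ℝ} (hu : ContDiffAt ℝ 2 u z) :
    py (px u) z = px (py u) z := by
  have hd : DifferentiableAt ℝ (fderiv ℝ u) z :=
    (hu.fderiv_right (m := 1) le_rfl).differentiableAt one_ne_zero
  calc py (px u) z = fderiv ℝ (fderiv ℝ u) z (0, 1) (1, 0) := fderiv_fderiv_apply hd _ _
    _ = fderiv ℝ (fderiv ℝ u) z (1, 0) (0, 1) :=
      (hu.isSymmSndFDerivAt (by simp [minSmoothness_of_isRCLikeNormedField])).eq _ _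
    _ = px (py u) z := (fderiv_fderiv_apply hd _ _).symm

theorem minimal_surface_symbol_pos (a b : ℝ) {ξ η : ℝ} (h : ξ ≠ 0 ∨ η ≠ 0) :
    0 < (1 + b ^ 2) * ξ ^ 2 - 2 * a * b * ξ * η + (1 + a ^ 2) * η ^ 2 := by
  have hξη : 0 < ξ ^ 2 + η ^ 2 := by
    rcases h with h | h
    · exact add_pos_of_pos_of_nonneg (by positivity) (sq_nonneg η)
    · exact add_pos_of_nonneg_of_pos (sq_nonneg ξ) (by positivity)
  nlinarith [sq_nonneg (b * ξ - a * η)]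

theorem second_partials_eq_zero_of_contact_invariant {u : ℝ × ℝ → ℝ} {φ : ℝ → ℝ} {z : ℝ × ℝ}
    (hu : ContDiffAt ℝ 2 u z) (hφ : DifferentiableAt ℝ φ (px u z))
    (hinv : py u =ᶠ[𝓝 z] fun w => φ (px u w)) (hsol : msOp u z = 0) :
    px (px u) z = 0 ∧ py (px u) z = 0 ∧ px (py u) z = 0 ∧ py (py u) z = 0 := by
  set c := deriv φ (px u z)
  have hchain : fderiv ℝ (py u) z = c • fderiv ℝ (px u) z :=
    fderiv_eq_deriv_smul_of_eventuallyEq_comp hinv hφ (hu.differentiableAt_fderiv_apply _)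
  have hxy : px (py u) z = c * px (px u) z := by simp [px, hchain]
  have hyy : py (py u) z = c * py (px u) z := by simp [py, hchain]
  have hyx : py (px u) z = c * px (px u) z := (py_px_eq_px_py hu).trans hxy
  have hxx : px (px u) z = 0 := by
    have hQ := minimal_surface_symbol_pos (px u z) (py u z) (ξ := 1) (η := c) (by simp)
    rw [msOp, hyy, hyx] at hsol
    have : px (px u) z * ((1 + py u z ^ 2) * 1 ^ 2 - 2 * px u z * py u z * 1 * c
        + (1 + px u z ^ 2) * c ^ 2) = 0 := by linear_combination hsol
    exact (mul_eq_zero.1 this).resolve_right hQ.ne'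
  refine ⟨hxx, ?_, ?_, ?_⟩ <;> simp [hxy, hyy, hyx, hxx]

/-- A minimal surface invariant with respect to a contact symmetry depending only
on first derivatives (`u_y = φ(u_x)` on `Ω`) is a plane: all second-order partial
derivatives of `u` vanish on `Ω` and the gradient of `u` is constant. -/
theorem contact_invariant_minimal_surface_is_plane
    (Ω : Set (ℝ × ℝ)) (hΩ : IsOpen Ω) (hconn : IsConnected Ω)
    (u : ℝ × ℝ → ℝ) (hu : ContDiffOn ℝ 2 u Ω)
    (hsol : ∀ z ∈ Ω, msOp u z = 0)
    (φ : ℝ → ℝ) (hφ : ContDiff ℝ 1 φ)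
    (hinv : ∀ z ∈ Ω, py u z = φ (px u z)) :
    (∀ z ∈ Ω, px (px u) z = 0 ∧ py (px u) z = 0 ∧ px (py u) z = 0 ∧ py (py u) z = 0)
      ∧ ∃ g : ℝ × ℝ, ∀ z ∈ Ω, px u z = g.1 ∧ py u z = g.2 := by
  have hu' : ∀ z ∈ Ω, ContDiffAt ℝ 2 u z := fun z hz => hu.contDiffAt (hΩ.mem_nhds hz)
  have hsecond : ∀ z ∈ Ω,
      px (px u) z = 0 ∧ py (px u) z = 0 ∧ px (py u) z = 0 ∧ py (py u) z = 0 :=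
    fun z hz => second_partials_eq_zero_of_contact_invariant (hu' z hz)
      (hφ.differentiable one_ne_zero _) (eventuallyEq_of_mem (hΩ.mem_nhds hz) hinv) (hsol z hz)
  refine ⟨hsecond, ?_⟩
  have hdiff : ∀ v, DifferentiableOn ℝ (fun w => fderiv ℝ u w v) Ω :=
    fun v z hz => ((hu' z hz).differentiableAt_fderiv_apply v).differentiableWithinAt
  obtain ⟨a, ha⟩ := exists_const_of_px_py_eq_zero hΩ hconn.isPreconnected (hdiff (1, 0))
    fun z hz => ⟨(hsecond z hz).1, (hsecond z hz).2.1⟩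
  obtain ⟨b, hb⟩ := exists_const_of_px_py_eq_zero hΩ hconn.isPreconnected (hdiff (0, 1))
    fun z hz => (hsecond z hz).2.2
  exact ⟨(a, b), fun z hz => ⟨ha z hz, hb z hz⟩⟩
end

section
/- Let k ≥ 1 be an integer and let f : ℝ → ℂ be any C² function satisfying (1 + p²)·f″(p) + 4k·p·f′(p) + 2k(2k − 1)·f(p) = 0 for all p ∈ ℝ. Then there exist unique constants C₁, C₂ ∈ ℂ such that f(p) = C₁·(p + i)^{1−2k} + C₂·(p − i)^{1−2k} for all p ∈ ℝ; i.e., the solution space of this ODE is exactly the two-dimensional span of (p + i)^{1−2k} and (p − i)^{1−2k}. -/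
/-!
With `m = 1 - 2k` the equation reads `(1 + p²) f'' - 2(m - 1) p f' + m(m - 1) f = 0`, and its
left-hand side factors as `(p - i) u' - (m - 1) u` with `u = (p + i) f' - m f`. Hence
`u = c (p - i)^(m - 1)`, and since `(p - i)^m` contributes `2im (p - i)^(m - 1)` to `u`, the
function `f - c/(2im) (p - i)^m` solves `(p + i) g' = m g`, so it is a multiple of `(p + i)^m`.
Both first-order steps reduce to `(g (p + c)^(-n))' = 0`. Uniqueness follows by evaluating at
`p = 0` and `p = 1`, using that `m` is odd.
-/

open Complex

theorem ofReal_add_ne_zero_of_im_ne_zero {c : ℂ} (hc : c.im ≠ 0) (p : ℝ) : (p : ℂ) + c ≠ 0 :=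
  fun h => hc (by simpa using congrArg im h)

theorem hasDerivAt_ofReal_add_zpow {c : ℂ} (hc : c.im ≠ 0) (n : ℤ) (p : ℝ) :
    HasDerivAt (fun q : ℝ => ((q : ℂ) + c) ^ n) (n * ((p : ℂ) + c) ^ (n - 1)) p := by
  simpa using ((hasDerivAt_zpow n _ (.inl (ofReal_add_ne_zero_of_im_ne_zero hc p))).comp (p : ℂ)
    ((hasDerivAt_id _).add_const c)).comp_ofReal

theorem exists_eq_mul_zpow_of_mul_deriv_eq {c : ℂ} (hc : c.im ≠ 0) {n : ℤ} {g : ℝ → ℂ}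
    (hg : Differentiable ℝ g) (h : ∀ p : ℝ, ((p : ℂ) + c) * deriv g p = n * g p) :
    ∃ C : ℂ, ∀ p : ℝ, g p = C * ((p : ℂ) + c) ^ n := by
  set q : ℝ → ℂ := fun p => g p * ((p : ℂ) + c) ^ (-n)
  have hq : ∀ p, HasDerivAt q 0 p := by
    intro p
    have hne := ofReal_add_ne_zero_of_im_ne_zero hc p
    refine ((hg p).hasDerivAt.mul (hasDerivAt_ofReal_add_zpow hc (-n) p)).congr_deriv ?_
    rw [zpow_sub_one₀ hne, Int.cast_neg]
    linear_combination (((p : ℂ) + c) ^ (-n) * ((p : ℂ) + c)⁻¹) * h p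
      - (((p : ℂ) + c) ^ (-n) * deriv g p) * mul_inv_cancel₀ hne
  refine ⟨q 0, fun p => ?_⟩
  rw [← is_const_of_deriv_eq_zero (fun p => (hq p).differentiableAt) (fun p => (hq p).deriv) p 0,
    mul_assoc, ← zpow_add₀ (ofReal_add_ne_zero_of_im_ne_zero hc p), neg_add_cancel, zpow_zero,
    mul_one]

theorem eq_zero_of_forall_add_I_zpow_eq_zero {m : ℤ} (hm : Odd m) {a b : ℂ}
    (h : ∀ p : ℝ, a * ((p : ℂ) + I) ^ m + b * ((p : ℂ) - I) ^ m = 0) : a = 0 ∧ b = 0 := by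
  have hIm : I ^ m ≠ 0 := zpow_ne_zero m I_ne_zero
  have hIm_sq : (I ^ m) ^ 2 = -1 := by
    rw [← zpow_natCast, ← zpow_mul, mul_comm, zpow_mul, zpow_natCast, I_sq, hm.neg_one_zpow]
  have hab : a = b := by
    have h0 := h 0
    rw [ofReal_zero, zero_add, zero_sub, hm.neg_zpow] at h0
    exact sub_eq_zero.mp (mul_right_cancel₀ hIm (by linear_combination h0))
  have hb : b = 0 := by
    have h1 := h 1
    rw [ofReal_one, show (1 : ℂ) + I = I * (1 - I) by linear_combination I_sq, mul_zpow, hab] at h1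
    have h1I : (1 - I) ^ m ≠ 0 := zpow_ne_zero m (by simpa using congrArg im ·)
    have : b * (I ^ m + 1) = 0 := mul_right_cancel₀ h1I (by linear_combination h1)
    refine (mul_eq_zero.mp this).resolve_right fun hI => ?_
    rw [eq_neg_of_add_eq_zero_left hI] at hIm_sq
    norm_num at hIm_sq
  exact ⟨hab.trans hb, hb⟩

theorem exists_eq_add_I_zpow_of_ode {m : ℤ} (hm : m ≠ 0) {f : ℝ → ℂ} (hf : ContDiff ℝ 2 f)
    (hode : ∀ p : ℝ, (1 + (p : ℂ) ^ 2) * deriv (deriv f) p - 2 * (m - 1) * p * deriv f p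
      + m * (m - 1) * f p = 0) :
    ∃ C : ℂ × ℂ, ∀ p : ℝ, f p = C.1 * ((p : ℂ) + I) ^ m + C.2 * ((p : ℂ) - I) ^ m := by
  have hf₁ : ∀ p, HasDerivAt f (deriv f p) p :=
    fun p => (hf.differentiable two_ne_zero p).hasDerivAt
  have hf₂ : ∀ p, HasDerivAt (deriv f) (deriv (deriv f) p) p :=
    fun p => (hf.differentiable_deriv_two p).hasDerivAt
  have hI : I.im ≠ 0 := by simp
  have hnegI : (-I).im ≠ 0 := by simp
  set u : ℝ → ℂ := fun p => ((p : ℂ) + I) * deriv f p - m * f p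
  have hu : ∀ p : ℝ, HasDerivAt u
      (((p : ℂ) + I) * deriv (deriv f) p + deriv f p - m * deriv f p) p := fun p =>
    (((hasDerivAt_id p).ofReal_comp.add_const I).mul (hf₂ p)
      |>.sub ((hf₁ p).const_mul (m : ℂ))).congr_deriv
        (by simp only [ofReal_one, one_mul, id_eq, sub_left_inj]; ring)
  -- `(p - i) u' - (m - 1) u` is the left-hand side of the equation
  obtain ⟨c, hc⟩ := exists_eq_mul_zpow_of_mul_deriv_eq hnegI (n := m - 1)
    (fun p => (hu p).differentiableAt) fun p => by
      rw [(hu p).deriv]; push_cast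
      linear_combination hode p - deriv (deriv f) p * I_sq
  set a := c / (2 * I * m)
  set g : ℝ → ℂ := fun p => f p - a * ((p : ℂ) + -I) ^ m
  have hg : ∀ p : ℝ, HasDerivAt g (deriv f p - a * (m * ((p : ℂ) + -I) ^ (m - 1))) p :=
    fun p => (hf₁ p).sub ((hasDerivAt_ofReal_add_zpow hnegI m p).const_mul a)
  obtain ⟨b, hb⟩ := exists_eq_mul_zpow_of_mul_deriv_eq hI (n := m)
    (fun p => (hg p).differentiableAt) fun p => by
      have hne := ofReal_add_ne_zero_of_im_ne_zero hnegI p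
      have ha : a * (2 * I * m) = c := div_mul_cancel₀ c (by simp [hm, I_ne_zero])
      have hpow : ((p : ℂ) + -I) ^ m = ((p : ℂ) + -I) ^ (m - 1) * ((p : ℂ) + -I) := by
        rw [← zpow_add_one₀ hne, sub_add_cancel]
      rw [(hg p).deriv]
      simp only [g, hpow]
      linear_combination hc p - ((p : ℂ) + -I) ^ (m - 1) * ha
  refine ⟨(b, a), fun p => ?_⟩
  linear_combination hb p

theorem even_head_ode_general_solution_general (k : ℕ)
    (f : ℝ → ℂ) (hf : ContDiff ℝ 2 f)
    (hode : ∀ p : ℝ,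
      ((1 : ℂ) + (p : ℂ) ^ 2) * deriv (deriv f) p
        + 4 * (k : ℂ) * (p : ℂ) * deriv f p
        + 2 * (k : ℂ) * (2 * (k : ℂ) - 1) * f p = 0) :
    ∃! C : ℂ × ℂ, ∀ p : ℝ,
      f p = C.1 * ((p : ℂ) + I) ^ (1 - 2 * (k : ℤ))
        + C.2 * ((p : ℂ) - I) ^ (1 - 2 * (k : ℤ)) := by
  obtain ⟨C, hC⟩ := exists_eq_add_I_zpow_of_ode (m := 1 - 2 * (k : ℤ)) (by omega) hf
    fun p => by push_cast; linear_combination hode p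
  refine ⟨C, hC, fun D hD => ?_⟩
  obtain ⟨h₁, h₂⟩ := eq_zero_of_forall_add_I_zpow_eq_zero (m := 1 - 2 * (k : ℤ)) ⟨-k, by ring⟩
    (a := D.1 - C.1) (b := D.2 - C.2) fun p => by linear_combination hC p - hD p
  exact Prod.ext (sub_eq_zero.mp h₁) (sub_eq_zero.mp h₂)

/-- Every `C²` solution `f : ℝ → ℂ` of `(1 + p²)f″ + 4kp·f′ + 2k(2k−1)f = 0` is a
unique complex linear combination of `(p + i)^{1−2k}` and `(p − i)^{1−2k}`. -/
theorem even_head_ode_general_solution (k : ℕ) (hk : 1 ≤ k)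
    (f : ℝ → ℂ) (hf : ContDiff ℝ 2 f)
    (hode : ∀ p : ℝ,
      ((1 : ℂ) + (p : ℂ) ^ 2) * deriv (deriv f) p
        + 4 * (k : ℂ) * (p : ℂ) * deriv f p
        + 2 * (k : ℂ) * (2 * (k : ℂ) - 1) * f p = 0) :
    ∃! C : ℂ × ℂ, ∀ p : ℝ,
      f p = C.1 * ((p : ℂ) + I) ^ (1 - 2 * (k : ℤ))
        + C.2 * ((p : ℂ) - I) ^ (1 - 2 * (k : ℤ)) :=
  even_head_ode_general_solution_general k f hf hode
end

section
/- The function φ₅ : ℝ² → ℝ, φ₅(p, q) = q·arctan(p), satisfies the symmetry-determining equation of the two-dimensional minimal surface equation: (1 + p²)·∂²φ₅/∂p² + 2pq·∂²φ₅/∂p∂q + (1 + q²)·∂²φ₅/∂q² = 0 for all (p, q) ∈ ℝ². (This is the first nonpolynomial contact symmetry uᵧ·arctan(uₓ) of the minimal surface equation.) -/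
/-! With `φ = q·arctan p` one has `φ_p = q/(1 + p²)` and `φ_q = arctan p`, hence
`φ_pp = -2pq/(1 + p²)²`, `φ_pq = 1/(1 + p²)` and `φ_qq = 0`; the first two terms of the
determining equation then cancel. Each partial derivative is computed as the ordinary
derivative of a one-variable section. -/

open Real

theorem px_eq_deriv {f : ℝ × ℝ → ℝ} {z : ℝ × ℝ} (hf : DifferentiableAt ℝ f z) :
    px f z = deriv (fun x => f (x, z.2)) z.1 := by
  have hsec : HasDerivAt (fun x : ℝ => (x, z.2)) (1, 0) z.1 :=
    (hasDerivAt_id z.1).prodMk (hasDerivAt_const z.1 z.2)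
  exact (hf.hasFDerivAt.comp_hasDerivAt z.1 hsec).deriv.symm

theorem py_eq_deriv {f : ℝ × ℝ → ℝ} {z : ℝ × ℝ} (hf : DifferentiableAt ℝ f z) :
    py f z = deriv (fun y => f (z.1, y)) z.2 := by
  have hsec : HasDerivAt (fun y : ℝ => (z.1, y)) (0, 1) z.2 :=
    (hasDerivAt_const z.2 z.1).prodMk (hasDerivAt_id z.2)
  exact (hf.hasFDerivAt.comp_hasDerivAt z.2 hsec).deriv.symm

theorem differentiable_snd_mul_arctan_fst :
    Differentiable ℝ (fun w : ℝ × ℝ => w.2 * arctan w.1) :=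
  differentiable_snd.mul differentiable_fst.arctan

theorem differentiable_snd_div_one_add_fst_sq :
    Differentiable ℝ (fun w : ℝ × ℝ => w.2 / (1 + w.1 ^ 2)) :=
  fun _ => differentiableAt_snd.mul <|
    ((differentiableAt_fst.pow 2).const_add 1).inv (by positivity)

theorem px_snd_mul_arctan_fst :
    px (fun w : ℝ × ℝ => w.2 * arctan w.1) = fun z => z.2 / (1 + z.1 ^ 2) := by
  funext z
  rw [px_eq_deriv differentiable_snd_mul_arctan_fst.differentiableAt]
  simp [div_eq_mul_inv]

theorem py_snd_mul_arctan_fst :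
    py (fun w : ℝ × ℝ => w.2 * arctan w.1) = fun z => arctan z.1 := by
  funext z
  rw [py_eq_deriv differentiable_snd_mul_arctan_fst.differentiableAt]
  simp

theorem px_snd_div_one_add_fst_sq (z : ℝ × ℝ) :
    px (fun w : ℝ × ℝ => w.2 / (1 + w.1 ^ 2)) z = -(2 * z.1 * z.2) / (1 + z.1 ^ 2) ^ 2 := by
  rw [px_eq_deriv differentiable_snd_div_one_add_fst_sq.differentiableAt]
  have hd := (hasDerivAt_const z.1 z.2).fun_div ((hasDerivAt_pow 2 z.1).const_add 1)
    (by positivity)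
  rw [hd.deriv]
  ring

theorem py_snd_div_one_add_fst_sq (z : ℝ × ℝ) :
    py (fun w : ℝ × ℝ => w.2 / (1 + w.1 ^ 2)) z = 1 / (1 + z.1 ^ 2) := by
  rw [py_eq_deriv differentiable_snd_div_one_add_fst_sq.differentiableAt]
  simp [div_eq_mul_inv]

theorem py_arctan_fst (z : ℝ × ℝ) : py (fun w : ℝ × ℝ => arctan w.1) z = 0 := by
  rw [py_eq_deriv (differentiable_fst.arctan z)]
  simp

/-- The first nonpolynomial contact symmetry `φ₅ = u_y·arctan(u_x)` of the
two-dimensional minimal surface equation: `φ₅(p, q) = q·arctan p` satisfies the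
determining equation `(1 + p²)φ_pp + 2pq·φ_pq + (1 + q²)φ_qq = 0`. -/
theorem phi5_satisfies_determining_equation :
    ∀ z : ℝ × ℝ,
      (1 + z.1 ^ 2) * px (px (fun w : ℝ × ℝ => w.2 * Real.arctan w.1)) z
        + 2 * z.1 * z.2 * py (px (fun w : ℝ × ℝ => w.2 * Real.arctan w.1)) z
        + (1 + z.2 ^ 2) * py (py (fun w : ℝ × ℝ => w.2 * Real.arctan w.1)) z = 0 := by
  intro z
  rw [px_snd_mul_arctan_fst, py_snd_mul_arctan_fst, px_snd_div_one_add_fst_sq,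
    py_snd_div_one_add_fst_sq, py_arctan_fst]
  field_simp
  ring
end

section
/- The functions φ₆, φ₇ : ℝ² → ℝ defined by φ₆(p, q) = p·q²/(1 + p²) + arctan(p) and φ₇(p, q) = q²/(1 + p²) − p·arctan(p) each satisfy the symmetry-determining equation of the two-dimensional minimal surface equation: (1 + p²)·∂²φ/∂p² + 2pq·∂²φ/∂p∂q + (1 + q²)·∂²φ/∂q² = 0 for all (p, q) ∈ ℝ². -/
/-! The form `φ = c(p) q² + b(p) q + a(p)` is preserved by `px` and `py`, so the determining
equation splits, coefficient by coefficient in `q`, into the ODEs `((1 + p²) c)'' = 0`,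
`((1 + p²) b')' = 0` and `(1 + p²) a'' + 2 c = 0`. With `b = 0` these are solved by
`c = (α p + β) / (1 + p²)` and `a = (α - β p) arctan p`; `φ₆` and `φ₇` are the cases
`(α, β) = (1, 0)` and `(0, 1)`. -/

open Real ContinuousLinearMap

noncomputable def determiningOperator (φ : ℝ × ℝ → ℝ) (z : ℝ × ℝ) : ℝ :=
  (1 + z.1 ^ 2) * px (px φ) z + 2 * z.1 * z.2 * py (px φ) z + (1 + z.2 ^ 2) * py (py φ) z

def quadInQ (a b c : ℝ → ℝ) (w : ℝ × ℝ) : ℝ := c w.1 * w.2 ^ 2 + b w.1 * w.2 + a w.1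

section QuadInQ

variable {a b c a' b' c' : ℝ → ℝ}

theorem hasFDerivAt_quadInQ (ha : ∀ p, HasDerivAt a (a' p) p) (hb : ∀ p, HasDerivAt b (b' p) p)
    (hc : ∀ p, HasDerivAt c (c' p) p) (z : ℝ × ℝ) :
    HasFDerivAt (quadInQ a b c)
      (quadInQ a' b' c' z • fst ℝ ℝ ℝ + (2 * c z.1 * z.2 + b z.1) • snd ℝ ℝ ℝ) z := by
  have hfst : HasFDerivAt (fun w : ℝ × ℝ => w.1) (fst ℝ ℝ ℝ) z := hasFDerivAt_fst
  have hsnd : HasFDerivAt (fun w : ℝ × ℝ => w.2) (snd ℝ ℝ ℝ) z := hasFDerivAt_snd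
  have h := ((((hc z.1).comp_hasFDerivAt z hfst).mul (hsnd.pow 2)).add
    (((hb z.1).comp_hasFDerivAt z hfst).mul hsnd)).add ((ha z.1).comp_hasFDerivAt z hfst)
  refine h.congr_fderiv (ContinuousLinearMap.ext fun v => ?_)
  simp only [Function.comp_apply, Nat.add_one_sub_one, pow_one, nsmul_eq_mul, Nat.cast_ofNat,
    add_apply, smul_apply, coe_snd', smul_eq_mul, coe_fst', quadInQ]
  ring

theorem px_quadInQ (ha : ∀ p, HasDerivAt a (a' p) p) (hb : ∀ p, HasDerivAt b (b' p) p)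
    (hc : ∀ p, HasDerivAt c (c' p) p) : px (quadInQ a b c) = quadInQ a' b' c' := by
  ext z
  simp [px, (hasFDerivAt_quadInQ ha hb hc z).fderiv]

theorem py_quadInQ (ha : ∀ p, HasDerivAt a (a' p) p) (hb : ∀ p, HasDerivAt b (b' p) p)
    (hc : ∀ p, HasDerivAt c (c' p) p) :
    py (quadInQ a b c) = quadInQ b (fun p => 2 * c p) 0 := by
  ext z
  simp [py, (hasFDerivAt_quadInQ ha hb hc z).fderiv, quadInQ]

theorem determiningOperator_quadInQ {a'' b'' c'' : ℝ → ℝ}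
    (ha : ∀ p, HasDerivAt a (a' p) p) (hb : ∀ p, HasDerivAt b (b' p) p)
    (hc : ∀ p, HasDerivAt c (c' p) p) (ha' : ∀ p, HasDerivAt a' (a'' p) p)
    (hb' : ∀ p, HasDerivAt b' (b'' p) p) (hc' : ∀ p, HasDerivAt c' (c'' p) p) (z : ℝ × ℝ) :
    determiningOperator (quadInQ a b c) z =
      ((1 + z.1 ^ 2) * c'' z.1 + 4 * z.1 * c' z.1 + 2 * c z.1) * z.2 ^ 2
        + ((1 + z.1 ^ 2) * b'' z.1 + 2 * z.1 * b' z.1) * z.2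
        + ((1 + z.1 ^ 2) * a'' z.1 + 2 * c z.1) := by
  have h0 : ∀ p, HasDerivAt (0 : ℝ → ℝ) 0 p := fun p => hasDerivAt_const p 0
  have h2c : ∀ p, HasDerivAt (fun p => 2 * c p) (2 * c' p) p := fun p => (hc p).const_mul 2
  rw [determiningOperator, px_quadInQ ha hb hc, px_quadInQ ha' hb' hc', py_quadInQ ha' hb' hc',
    py_quadInQ ha hb hc, py_quadInQ hb h2c h0]
  simp only [quadInQ, Pi.zero_apply]
  ring

end QuadInQ

theorem HasDerivAt.div_one_add_sq_pow {f : ℝ → ℝ} {f' p : ℝ} (hf : HasDerivAt f f' p) (n : ℕ) :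
    HasDerivAt (fun x => f x / (1 + x ^ 2) ^ n)
      ((f' * (1 + p ^ 2) - 2 * n * p * f p) / (1 + p ^ 2) ^ (n + 1)) p := by
  have hden : HasDerivAt (fun x : ℝ => (1 + x ^ 2) ^ n) (n * (1 + p ^ 2) ^ (n - 1) * (2 * p)) p := by
    simpa using ((hasDerivAt_pow 2 p).const_add 1).fun_pow n
  have hpos : (0 : ℝ) < 1 + p ^ 2 := by positivity
  refine (hf.fun_div hden (pow_pos hpos n).ne').congr_deriv ?_
  rcases n with _ | n
  · simp [hpos.ne']
  · rw [Nat.add_sub_cancel]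
    field_simp
    ring

section DegreeTwoFamily

variable (α β : ℝ)

theorem hasDerivAt_affine_div_one_add_sq (p : ℝ) :
    HasDerivAt (fun x => (α * x + β) / (1 + x ^ 2))
      ((α - 2 * β * p - α * p ^ 2) / (1 + p ^ 2) ^ 2) p := by
  have h := ((hasDerivAt_id' p).const_mul α |>.add_const β).div_one_add_sq_pow 1
  simp only [pow_one] at h
  exact h.congr_deriv (by ring)

theorem hasDerivAt_deriv_affine_div_one_add_sq (p : ℝ) :
    HasDerivAt (fun x => (α - 2 * β * x - α * x ^ 2) / (1 + x ^ 2) ^ 2)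
      ((2 * α * p ^ 3 + 6 * β * p ^ 2 - 6 * α * p - 2 * β) / (1 + p ^ 2) ^ 3) p := by
  have hnum : HasDerivAt (fun x => α - 2 * β * x - α * x ^ 2) (-2 * β - 2 * α * p) p :=
    (((hasDerivAt_id' p).const_mul (2 * β)).const_sub α).fun_sub
      ((hasDerivAt_pow 2 p).const_mul α) |>.congr_deriv (by ring)
  exact (hnum.div_one_add_sq_pow 2).congr_deriv (by ring)

theorem hasDerivAt_affine_mul_arctan (p : ℝ) :
    HasDerivAt (fun x => (α - β * x) * arctan x) (-β * arctan p + (α - β * p) / (1 + p ^ 2)) p :=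
  (((hasDerivAt_id' p).const_mul β).const_sub α).fun_mul (hasDerivAt_arctan p)
    |>.congr_deriv (by ring)

theorem hasDerivAt_deriv_affine_mul_arctan (p : ℝ) :
    HasDerivAt (fun x => -β * arctan x + (α - β * x) / (1 + x ^ 2))
      (-2 * (α * p + β) / (1 + p ^ 2) ^ 2) p := by
  have h := ((hasDerivAt_arctan p).const_mul (-β)).fun_add
    ((((hasDerivAt_id' p).const_mul β).const_sub α).div_one_add_sq_pow 1)
  simp only [pow_one] at h
  refine h.congr_deriv ?_
  field_simp
  ring

theorem determiningOperator_degreeTwo_eq_zero (z : ℝ × ℝ) :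
    determiningOperator
      (quadInQ (fun p => (α - β * p) * arctan p) 0 (fun p => (α * p + β) / (1 + p ^ 2))) z = 0 := by
  have h0 : ∀ p, HasDerivAt (0 : ℝ → ℝ) 0 p := fun p => hasDerivAt_const p 0
  rw [determiningOperator_quadInQ (hasDerivAt_affine_mul_arctan α β) h0
    (hasDerivAt_affine_div_one_add_sq α β) (hasDerivAt_deriv_affine_mul_arctan α β) h0
    (hasDerivAt_deriv_affine_div_one_add_sq α β)]
  field_simp
  ring

end DegreeTwoFamily

/-- The degree-2 contact symmetries `φ₆(p,q) = pq²/(1 + p²) + arctan p` and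
`φ₇(p,q) = q²/(1 + p²) − p·arctan p` of the two-dimensional minimal surface
equation both satisfy the determining equation
`(1 + p²)φ_pp + 2pq·φ_pq + (1 + q²)φ_qq = 0`. -/
theorem phi6_phi7_satisfy_determining_equation :
    (∀ z : ℝ × ℝ,
      (1 + z.1 ^ 2)
          * px (px (fun w : ℝ × ℝ => w.1 * w.2 ^ 2 / (1 + w.1 ^ 2) + Real.arctan w.1)) z
        + 2 * z.1 * z.2
          * py (px (fun w : ℝ × ℝ => w.1 * w.2 ^ 2 / (1 + w.1 ^ 2) + Real.arctan w.1)) z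
        + (1 + z.2 ^ 2)
          * py (py (fun w : ℝ × ℝ => w.1 * w.2 ^ 2 / (1 + w.1 ^ 2) + Real.arctan w.1)) z
        = 0)
    ∧ (∀ z : ℝ × ℝ,
      (1 + z.1 ^ 2)
          * px (px (fun w : ℝ × ℝ => w.2 ^ 2 / (1 + w.1 ^ 2) - w.1 * Real.arctan w.1)) z
        + 2 * z.1 * z.2
          * py (px (fun w : ℝ × ℝ => w.2 ^ 2 / (1 + w.1 ^ 2) - w.1 * Real.arctan w.1)) z
        + (1 + z.2 ^ 2)
          * py (py (fun w : ℝ × ℝ => w.2 ^ 2 / (1 + w.1 ^ 2) - w.1 * Real.arctan w.1)) z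
        = 0) := by
  have hφ₆ : (fun w : ℝ × ℝ => w.1 * w.2 ^ 2 / (1 + w.1 ^ 2) + arctan w.1) =
      quadInQ (fun p => (1 - 0 * p) * arctan p) 0 (fun p => (1 * p + 0) / (1 + p ^ 2)) := by
    ext w
    simp only [quadInQ, Pi.zero_apply]
    ring
  have hφ₇ : (fun w : ℝ × ℝ => w.2 ^ 2 / (1 + w.1 ^ 2) - w.1 * arctan w.1) =
      quadInQ (fun p => (0 - 1 * p) * arctan p) 0 (fun p => (0 * p + 1) / (1 + p ^ 2)) := by
    ext w
    simp only [quadInQ, Pi.zero_apply]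
    ring
  refine ⟨fun z => ?_, fun z => ?_⟩
  · rw [hφ₆]
    exact determiningOperator_degreeTwo_eq_zero 1 0 z
  · rw [hφ₇]
    exact determiningOperator_degreeTwo_eq_zero 0 1 z
end
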